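/- arXiv:math/9811037 — 2 statements merged into one kernel-verified Lean document; each statement's English description precedes it below -/
import Mathlib

section
/- In a Segal space W, composition is associative up to homotopy: given points f ∈ map(w,x), g ∈ map(x,y), h ∈ map(y,z), the composites (h∘g)∘f and h∘(g∘f) lie in the same path component of map(w,z). -/
open CategoryTheory Opposite

/-- Bisimplicial sets. -/
abbrev BiSSet := (SimplexCategoryᵒᵖ × SimplexCategoryᵒᵖ) ⥤ Type

namespace BiSSet

variable (W : BiSSet)

/-- Action in the first (horizontal) simplicial direction. -/
def hmap {a b : SimplexCategory} (θ : a ⟶ b) (n : SimplexCategoryᵒᵖ)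
    (x : W.obj (op b, n)) : W.obj (op a, n) :=
  W.map ((θ.op, 𝟙 n) : ((op b, n) : SimplexCategoryᵒᵖ × SimplexCategoryᵒᵖ) ⟶ (op a, n)) x

/-- Action in the second (vertical) simplicial direction. -/
def vmap {m n : SimplexCategory} (θ : m ⟶ n) (a : SimplexCategoryᵒᵖ)
    (x : W.obj (a, op n)) : W.obj (a, op m) :=
  W.map ((𝟙 a, θ.op) : ((a, op n) : SimplexCategoryᵒᵖ × SimplexCategoryᵒᵖ) ⟶ (a, op m)) x

lemma hmap_hmap {a b c : SimplexCategory} (θ : a ⟶ b) (η : b ⟶ c) (n : SimplexCategoryᵒᵖ)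
    (x : W.obj (op c, n)) : W.hmap θ n (W.hmap η n x) = W.hmap (θ ≫ η) n x := by
  dsimp [hmap]
  rw [← FunctorToTypes.map_comp_apply]
  rfl

/-- The set of "k-simplices of objects": the points of the `k`-th space. -/
abbrev Pt (k : ℕ) : Type := W.obj (op (SimplexCategory.mk k), op (SimplexCategory.mk 0))

/-- The source of a point of `W₁`. -/
def src (f : W.Pt 1) : W.Pt 0 := W.hmap (SimplexCategory.δ 1) _ f

/-- The target of a point of `W₁`. -/
def tgt (f : W.Pt 1) : W.Pt 0 := W.hmap (SimplexCategory.δ 0) _ f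

/-- The identity map of an object `x`, i.e. `s₀ x`. -/
def hid (x : W.Pt 0) : W.Pt 1 := W.hmap (SimplexCategory.σ 0) _ x

lemma src_hid (x : W.Pt 0) : W.src (W.hid x) = x := by
  dsimp [src, hid]
  rw [W.hmap_hmap]
  have : (SimplexCategory.δ 1 ≫ SimplexCategory.σ 0 :
      SimplexCategory.mk 0 ⟶ SimplexCategory.mk 0) = 𝟙 _ := by
    apply SimplexCategory.Hom.ext
    apply OrderHom.ext
    funext j
    exact @Subsingleton.elim (Fin 1) _ _ _
  rw [this]
  exact FunctorToTypes.map_id_apply W x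

lemma tgt_hid (x : W.Pt 0) : W.tgt (W.hid x) = x := by
  dsimp [tgt, hid]
  rw [W.hmap_hmap]
  have : (SimplexCategory.δ 0 ≫ SimplexCategory.σ 0 :
      SimplexCategory.mk 0 ⟶ SimplexCategory.mk 0) = 𝟙 _ := by
    apply SimplexCategory.Hom.ext
    apply OrderHom.ext
    funext j
    exact @Subsingleton.elim (Fin 1) _ _ _
  rw [this]
  exact FunctorToTypes.map_id_apply W x

/-- One step of a homotopy between points `f g` of `map(x,y) ⊆ W₁`:
a vertical `1`-simplex of `W₁` lying in the fiber over `(x,y)`. -/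
def HtpyStep (x y : W.Pt 0) (f g : W.Pt 1) : Prop :=
  ∃ e : W.obj (op (SimplexCategory.mk 1), op (SimplexCategory.mk 1)),
    W.vmap (SimplexCategory.δ 1) _ e = f ∧ W.vmap (SimplexCategory.δ 0) _ e = g ∧
    W.hmap (SimplexCategory.δ 1) _ e = W.vmap (SimplexCategory.σ 0) _ x ∧
    W.hmap (SimplexCategory.δ 0) _ e = W.vmap (SimplexCategory.σ 0) _ y

/-- `f` and `g` lie in the same path component of the mapping space `map(x,y)`. -/
def Homotopic (x y : W.Pt 0) (f g : W.Pt 1) : Prop :=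
  Relation.EqvGen (W.HtpyStep x y) f g

/-- `c` is a result of a composition of `f` (first) and `g` (second): there is a
point `k` of `W₂` lifting `(g,f)` along the Segal map `φ₂ = (d₂, d₀)`, with `d₁ k = c`. -/
def IsComposite (f g c : W.Pt 1) : Prop :=
  ∃ k : W.Pt 2,
    W.hmap (SimplexCategory.δ 2) _ k = f ∧
    W.hmap (SimplexCategory.δ 0) _ k = g ∧
    W.hmap (SimplexCategory.δ 1) _ k = c

/-- The `k`-th row of a bisimplicial set, a simplicial set. -/
def row (k : SimplexCategory) : SSet := (Functor.curry.obj W).obj (op k)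

/-- The simplicial map between rows induced by a morphism of `SimplexCategory`. -/
def rowMap {a b : SimplexCategory} (θ : a ⟶ b) : W.row b ⟶ W.row a :=
  (Functor.curry.obj W).map θ.op

lemma rowMap_rowMap {a b c : SimplexCategory} (θ : a ⟶ b) (η : b ⟶ c)
    (n : SimplexCategoryᵒᵖ) (x : (W.row c).obj n) :
    (W.rowMap θ).app n ((W.rowMap η).app n x) = (W.rowMap (θ ≫ η)).app n x := by
  dsimp only [rowMap]
  rw [op_comp, Functor.map_comp]
  rfl

/-- The map `[1] → [k]` hitting `i` and `i+1`. -/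
def arrowHom (k : ℕ) (i : Fin k) : SimplexCategory.mk 1 ⟶ SimplexCategory.mk k :=
  SimplexCategory.mkHom
    ⟨fun j => ⟨(i : ℕ) + (j : ℕ), by omega⟩, by
      intro a b hab
      simp only [Fin.mk_le_mk]
      omega⟩

/-- The target of the `k`-th Segal map: the `k`-fold fiber product
`W₁ ×_{W₀} ⋯ ×_{W₀} W₁`, as a simplicial set. -/
def segalTarget (k : ℕ) : SSet where
  obj n :=
    { f : Fin k → (W.row (SimplexCategory.mk 1)).obj n //
      ∀ (i : Fin k) (h : (i : ℕ) + 1 < k),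
        (W.rowMap (SimplexCategory.δ 0)).app n (f i) =
        (W.rowMap (SimplexCategory.δ 1)).app n (f ⟨(i : ℕ) + 1, h⟩) }
  map {n n'} g := TypeCat.ofHom fun x =>
    ⟨fun i => (W.row (SimplexCategory.mk 1)).map g (x.1 i), by
      intro i h
      rw [FunctorToTypes.naturality, FunctorToTypes.naturality, x.2 i h]⟩
  map_id n := by
    apply ConcreteCategory.hom_ext
    intro x
    apply Subtype.ext
    funext i
    exact (W.row (SimplexCategory.mk 1)).map_id_apply n (x.1 i)
  map_comp {n n' n''} g g' := by
    apply ConcreteCategory.hom_ext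
    intro x
    apply Subtype.ext
    funext i
    exact (W.row (SimplexCategory.mk 1)).map_comp_apply g g' (x.1 i)

lemma arrowHom_comp_zero (k : ℕ) (i : Fin k) (h : (i : ℕ) + 1 < k) :
    (SimplexCategory.δ 0 ≫ arrowHom k i : SimplexCategory.mk 0 ⟶ SimplexCategory.mk k) =
    SimplexCategory.δ 1 ≫ arrowHom k ⟨(i : ℕ) + 1, h⟩ := by
  apply SimplexCategory.Hom.ext
  apply OrderHom.ext
  funext j
  have hj : j = 0 := @Subsingleton.elim (Fin 1) _ _ _
  subst hj
  apply Fin.ext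
  simp [SimplexCategory.δ, arrowHom, Fin.succAbove]
  rfl

/-- The `k`-th Segal map `φ_k : W_k → W₁ ×_{W₀} ⋯ ×_{W₀} W₁`. -/
def segalMap (k : ℕ) : W.row (SimplexCategory.mk k) ⟶ W.segalTarget k where
  app n := TypeCat.ofHom fun x =>
    ⟨fun i => (W.rowMap (arrowHom k i)).app n x, by
      intro i h
      rw [W.rowMap_rowMap, W.rowMap_rowMap, arrowHom_comp_zero k i h]⟩
  naturality {n n'} g := by
    apply ConcreteCategory.hom_ext
    intro x
    apply Subtype.ext
    funext i
    show (W.rowMap (arrowHom k i)).app n' ((W.row (SimplexCategory.mk k)).map g x) =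
      (W.row (SimplexCategory.mk 1)).map g ((W.rowMap (arrowHom k i)).app n x)
    exact NatTrans.naturality_apply (W.rowMap (arrowHom k i)) g x

/-- A Segal space (in the operative sense used throughout): the Segal maps `φ_k`, `k ≥ 2`,
are trivial fibrations of simplicial sets, i.e. have the right lifting property with respect
to all boundary inclusions `∂Δ[n] → Δ[n]`. -/
def IsSegal : Prop :=
  ∀ (k : ℕ), 2 ≤ k → ∀ (n : ℕ),
    HasLiftingProperty (SSet.boundary.{0} n).ι (W.segalMap k)

end BiSSet

section TrivFib

open Simplicial


lemma fin1_eq {N : ℕ} (hN : N = 0) (a b : Fin (N + 1)) : a = b := by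
  subst hN
  have ha := a.isLt
  have hb := b.isLt
  apply Fin.ext
  omega

lemma fin2_const {N : ℕ} (α : Fin (N + 1) →o Fin 2)
    (h : ¬ Function.Surjective α) (j : Fin (N + 1)) : α j = α 0 := by
  have : ∃ v : Fin 2, ∀ i, α i ≠ v := by
    by_contra hc
    push_neg at hc
    exact h fun v => hc v
  obtain ⟨v, hv⟩ := this
  apply Fin.ext
  have e1 : (α j).val ≠ v.val := fun h' => hv j (Fin.ext h')
  have e2 : (α 0).val ≠ v.val := fun h' => hv 0 (Fin.ext h')
  have := (α j).isLt
  have := (α 0).isLt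
  have := v.isLt
  omega

lemma tf_surj0 {X Y : SSet.{0}} (p : X ⟶ Y)
    (hp : HasLiftingProperty (SSet.boundary.{0} 0).ι p)
    (y : Y.obj (op (SimplexCategory.mk 0))) :
    ∃ x, p.app _ x = y := by
  have emp : ∀ (m : SimplexCategoryᵒᵖ) (α : (SSet.boundary 0).obj m), False := by
    rintro m ⟨α, hα⟩
    exact hα fun v => ⟨0, by apply fin1_eq rfl⟩
  let top : (SSet.boundary 0 : SSet.{0}) ⟶ X :=
    { app := fun m => TypeCat.ofHom fun α => (emp m α).elim
      naturality := by intro m m' φ; ext α; exact (emp m α).elim }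
  let bot : (Δ[0] : SSet.{0}) ⟶ Y := SSet.yonedaEquiv.symm y
  have sq : CommSq top (SSet.boundary.{0} 0).ι p bot :=
    ⟨by ext⟩
  let ι : (Δ[0] : SSet.{0}).obj (op (SimplexCategory.mk 0)) := ULift.up (𝟙 _)
  refine ⟨sq.lift.app _ ι, ?_⟩
  have hr : p.app _ (sq.lift.app _ ι) = bot.app _ ι :=
    congrArg (fun φ : (Δ[0] : SSet.{0}) ⟶ Y => φ.app (op (SimplexCategory.mk 0)) ι) sq.fac_right
  rw [hr]
  show Y.map (𝟙 (SimplexCategory.mk 0)).op y = y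
  simp

lemma tf_lift1 {X Y : SSet.{0}} (p : X ⟶ Y)
    (hp : HasLiftingProperty (SSet.boundary.{0} 1).ι p)
    (x0 x1 : X.obj (op (SimplexCategory.mk 0))) (y : Y.obj (op (SimplexCategory.mk 1)))
    (h0 : Y.map (SimplexCategory.δ 1).op y = p.app _ x0)
    (h1 : Y.map (SimplexCategory.δ 0).op y = p.app _ x1) :
    ∃ e : X.obj (op (SimplexCategory.mk 1)),
      X.map (SimplexCategory.δ 1).op e = x0 ∧ X.map (SimplexCategory.δ 0).op e = x1 ∧
      p.app _ e = y := by
  classical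
  let pick : Fin 2 → X.obj (op (SimplexCategory.mk 0)) := ![x0, x1]
  have hconst : ∀ (m : SimplexCategoryᵒᵖ) (α : (SSet.boundary 1).obj m)
      (j : Fin (m.unop.len + 1)), SSet.stdSimplex.asOrderHom α.1 j = SSet.stdSimplex.asOrderHom α.1 0 :=
    fun m α j => fin2_const _ α.2 j
  let top : (SSet.boundary 1 : SSet.{0}) ⟶ X :=
    { app := fun m => TypeCat.ofHom fun α =>
        X.map (SimplexCategory.const m.unop (SimplexCategory.mk 0) 0).op
          (pick (SSet.stdSimplex.asOrderHom α.1 0))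
      naturality := by
        intro m m' φ
        ext α
        show X.map (SimplexCategory.const m'.unop (SimplexCategory.mk 0) 0).op
            (pick (SSet.stdSimplex.asOrderHom ((SSet.boundary 1 : SSet.{0}).map φ α).1 0))
          = X.map φ (X.map (SimplexCategory.const m.unop (SimplexCategory.mk 0) 0).op
            (pick (SSet.stdSimplex.asOrderHom α.1 0)))
        rw [← FunctorToTypes.map_comp_apply]
        have hφ : (SimplexCategory.const m.unop (SimplexCategory.mk 0) 0).op ≫ φ
            = (SimplexCategory.const m'.unop (SimplexCategory.mk 0) 0).op :=
          congrArg Quiver.Hom.op (SimplexCategory.eq_const_to_zero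
            (φ.unop ≫ SimplexCategory.const m.unop (SimplexCategory.mk 0) 0))
        rw [hφ]
        have hval : SSet.stdSimplex.asOrderHom ((SSet.boundary 1 : SSet.{0}).map φ α).1 0
            = SSet.stdSimplex.asOrderHom α.1 0 := hconst m α (φ.unop.toOrderHom 0)
        rw [hval] }
  let bot : (Δ[1] : SSet.{0}) ⟶ Y := SSet.yonedaEquiv.symm y
  have key : ∀ (v : Fin 2)
      (c : (SimplexCategory.mk 0 : SimplexCategory) ⟶ (SimplexCategory.mk 1)),
      c.toOrderHom 0 = v →
      p.app _ (pick v) = Y.map c.op y := by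
    intro v c hc
    match v with
    | 0 =>
      have : c = SimplexCategory.δ 1 := by
        apply SimplexCategory.Hom.ext_zero_left
        rw [hc]
        simp [SimplexCategory.δ, Fin.succAbove]
      rw [this]
      exact h0.symm
    | 1 =>
      have : c = SimplexCategory.δ 0 := by
        apply SimplexCategory.Hom.ext_zero_left
        rw [hc]
        simp [SimplexCategory.δ, Fin.succAbove]
      rw [this]
      exact h1.symm
  have sq : CommSq top (SSet.boundary.{0} 1).ι p bot := by
    constructor
    ext m α
    show p.app m (X.map (SimplexCategory.const m.unop (SimplexCategory.mk 0) 0).op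
        (pick (SSet.stdSimplex.asOrderHom α.1 0))) = Y.map (α.1.down).op y
    rw [FunctorToTypes.naturality]
    rw [key (SSet.stdSimplex.asOrderHom α.1 0)
      (SimplexCategory.const (SimplexCategory.mk 0) (SimplexCategory.mk 1)
        (SSet.stdSimplex.asOrderHom α.1 0)) rfl]
    rw [← FunctorToTypes.map_comp_apply, ← op_comp]
    have hcomp : (SimplexCategory.const m.unop (SimplexCategory.mk 0) 0
        ≫ SimplexCategory.const (SimplexCategory.mk 0) (SimplexCategory.mk 1)
          (SSet.stdSimplex.asOrderHom α.1 0)) = α.1.down := by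
      apply SimplexCategory.Hom.ext
      apply OrderHom.ext
      funext j
      exact (hconst m α j).symm
    rw [hcomp]
  let ι : (Δ[1] : SSet.{0}).obj (op (SimplexCategory.mk 1)) := ULift.up (𝟙 _)
  have extract : ∀ (i : Fin 2) (hδns : ¬ Function.Surjective
        (SSet.stdSimplex.asOrderHom.{0} (ULift.up (SimplexCategory.δ i) :
          (Δ[1] : SSet.{0}).obj (op (SimplexCategory.mk 0)))))
      (hv : (SimplexCategory.δ i :
        (SimplexCategory.mk 0 : SimplexCategory) ⟶ _).toOrderHom 0 = (1 : Fin 2) - i),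
      X.map (SimplexCategory.δ i).op (sq.lift.app _ ι) = pick ((1 : Fin 2) - i) := by
    intro i hδns hv
    have hn : X.map (SimplexCategory.δ i).op (sq.lift.app _ ι)
        = sq.lift.app _ ((Δ[1] : SSet.{0}).map (SimplexCategory.δ i).op ι) :=
      (NatTrans.naturality_apply sq.lift (SimplexCategory.δ i).op ι).symm
    rw [hn]
    have himg : (Δ[1] : SSet.{0}).map (SimplexCategory.δ i).op ι
        = ULift.up (SimplexCategory.δ i) := by
      show ULift.up (SimplexCategory.δ i ≫ 𝟙 _) = _
      rw [Category.comp_id]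
    rw [himg]
    have hl : sq.lift.app (op (SimplexCategory.mk 0)) (ULift.up (SimplexCategory.δ i))
        = X.map (SimplexCategory.const (SimplexCategory.mk 0) (SimplexCategory.mk 0) 0).op
            (pick (SSet.stdSimplex.asOrderHom.{0} (ULift.up (SimplexCategory.δ i) :
              (Δ[1] : SSet.{0}).obj (op (SimplexCategory.mk 0))) 0)) :=
      congrArg (fun φ : (SSet.boundary.{0} 1 : SSet.{0}) ⟶ X => φ.app (op (SimplexCategory.mk 0))
        (⟨ULift.up (SimplexCategory.δ i), hδns⟩ : (SSet.boundary 1 : SSet.{0}).obj _)) sq.fac_left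
    rw [hl]
    have hval : SSet.stdSimplex.asOrderHom.{0} (ULift.up (SimplexCategory.δ i) :
        (Δ[1] : SSet.{0}).obj (op (SimplexCategory.mk 0))) 0 = (1 : Fin 2) - i := hv
    rw [hval, SimplexCategory.const_eq_id]
    show X.map (𝟙 _) _ = _
    simp
  refine ⟨sq.lift.app _ ι, ?_, ?_, ?_⟩
  · have h := extract 1 ?_ ?_
    · exact h
    · intro hs
      obtain ⟨j, hj⟩ := hs 1
      have hj0 : j = 0 := by apply fin1_eq rfl
      rw [hj0] at hj
      have : SSet.stdSimplex.asOrderHom.{0} (ULift.up (SimplexCategory.δ (1 : Fin 2)) :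
          (Δ[1] : SSet.{0}).obj (op (SimplexCategory.mk 0))) 0 = 0 := by
        simp [SSet.stdSimplex.asOrderHom, SimplexCategory.δ, Fin.succAbove]
      rw [this] at hj
      exact absurd hj (by decide)
    · simp [SimplexCategory.δ, Fin.succAbove]
  · have h := extract 0 ?_ ?_
    · exact h
    · intro hs
      obtain ⟨j, hj⟩ := hs 0
      have hj0 : j = 0 := by apply fin1_eq rfl
      rw [hj0] at hj
      have : SSet.stdSimplex.asOrderHom.{0} (ULift.up (SimplexCategory.δ (0 : Fin 2)) :
          (Δ[1] : SSet.{0}).obj (op (SimplexCategory.mk 0))) 0 = 1 := by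
        simp [SSet.stdSimplex.asOrderHom, SimplexCategory.δ, Fin.succAbove]
      rw [this] at hj
      exact absurd hj (by decide)
    · simp [SimplexCategory.δ, Fin.succAbove]
  · have hr : p.app _ (sq.lift.app _ ι) = bot.app _ ι :=
      congrArg (fun φ : (Δ[1] : SSet.{0}) ⟶ Y => φ.app (op (SimplexCategory.mk 1)) ι) sq.fac_right
    rw [hr]
    show Y.map (𝟙 (SimplexCategory.mk 1)).op y = y
    simp


end TrivFib

namespace BiSSet

open SimplexCategory

variable (W : BiSSet)

lemma vmap_vmap {m n p : SimplexCategory} (θ : m ⟶ n) (η : n ⟶ p) (a : SimplexCategoryᵒᵖ)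
    (x : W.obj (a, op p)) : W.vmap θ a (W.vmap η a x) = W.vmap (θ ≫ η) a x := by
  dsimp [vmap]
  rw [← FunctorToTypes.map_comp_apply]
  congr 1

lemma hv_comm {a b m n : SimplexCategory} (θ : a ⟶ b) (η : m ⟶ n)
    (x : W.obj (op b, op n)) :
    W.hmap θ (op m) (W.vmap η (op b) x) = W.vmap η (op a) (W.hmap θ (op n) x) := by
  dsimp [hmap, vmap]
  rw [← FunctorToTypes.map_comp_apply, ← FunctorToTypes.map_comp_apply]
  congr 1

lemma row_map_eq_vmap {k m n : SimplexCategory} (θ : m ⟶ n) (x : (W.row k).obj (op n)) :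
    (W.row k).map θ.op x = W.vmap θ (op k) x := by
  dsimp [row, vmap]
  rfl

lemma rowMap_app_eq_hmap {a b : SimplexCategory} (θ : a ⟶ b) (n : SimplexCategoryᵒᵖ)
    (x : (W.row b).obj n) : (W.rowMap θ).app n x = W.hmap θ n x := by
  dsimp [rowMap, hmap]
  rfl

lemma vmap_d_s (i : Fin 2) {a : SimplexCategoryᵒᵖ} (x : W.obj (a, op (mk 0))) :
    W.vmap (δ i) a (W.vmap (σ 0) a x) = x := by
  rw [W.vmap_vmap]
  have : (δ i ≫ σ 0 : mk 0 ⟶ mk 0) = 𝟙 _ := by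
    apply SimplexCategory.Hom.ext
    apply OrderHom.ext
    funext j
    apply fin1_eq rfl
  rw [this]
  exact FunctorToTypes.map_id_apply W x

lemma reflStep (b : W.Pt 1) : W.HtpyStep (W.src b) (W.tgt b) b b := by
  refine ⟨W.vmap (σ 0) _ b, W.vmap_d_s 1 b, W.vmap_d_s 0 b, ?_, ?_⟩
  · exact W.hv_comm (δ 1) (σ 0) b
  · exact W.hv_comm (δ 0) (σ 0) b

lemma htpyStep_src {x y : W.Pt 0} {f g : W.Pt 1} (h : W.HtpyStep x y f g) :
    W.src f = x := by
  obtain ⟨e, h1, h0, hs, ht⟩ := h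
  rw [← h1]
  show W.hmap (δ 1) _ (W.vmap (δ 1) _ e) = x
  rw [W.hv_comm, hs, W.vmap_d_s]

lemma arrowHom20 : arrowHom 2 0 = δ 2 := by
  apply SimplexCategory.Hom.ext_one_left <;> decide

lemma arrowHom21 : arrowHom 2 1 = δ 0 := by
  apply SimplexCategory.Hom.ext_one_left <;> decide

lemma vertex0_two : (δ 1 ≫ δ 1 : mk 0 ⟶ mk 2) = δ 1 ≫ arrowHom 2 0 :=
  SimplexCategory.Hom.ext_zero_left _ _ (by decide)

lemma vertex2_two : (δ 0 ≫ δ 1 : mk 0 ⟶ mk 2) = δ 0 ≫ arrowHom 2 1 :=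
  SimplexCategory.Hom.ext_zero_left _ _ (by decide)

lemma F1 : (δ 2 ≫ δ 3 : mk 1 ⟶ mk 3) = arrowHom 3 0 :=
  SimplexCategory.Hom.ext_one_left _ _ (by decide) (by decide)
lemma F2 : (δ 0 ≫ δ 3 : mk 1 ⟶ mk 3) = arrowHom 3 1 :=
  SimplexCategory.Hom.ext_one_left _ _ (by decide) (by decide)
lemma F3 : (δ 2 ≫ δ 0 : mk 1 ⟶ mk 3) = arrowHom 3 1 :=
  SimplexCategory.Hom.ext_one_left _ _ (by decide) (by decide)
lemma F4 : (δ 0 ≫ δ 0 : mk 1 ⟶ mk 3) = arrowHom 3 2 :=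
  SimplexCategory.Hom.ext_one_left _ _ (by decide) (by decide)
lemma F5 : (δ 2 ≫ δ 2 : mk 1 ⟶ mk 3) = arrowHom 3 0 :=
  SimplexCategory.Hom.ext_one_left _ _ (by decide) (by decide)
lemma F6 : (δ 0 ≫ δ 2 : mk 1 ⟶ mk 3) = δ 1 ≫ δ 0 :=
  SimplexCategory.Hom.ext_one_left _ _ (by decide) (by decide)
lemma F7 : (δ 2 ≫ δ 1 : mk 1 ⟶ mk 3) = δ 1 ≫ δ 3 :=
  SimplexCategory.Hom.ext_one_left _ _ (by decide) (by decide)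
lemma F8 : (δ 0 ≫ δ 1 : mk 1 ⟶ mk 3) = arrowHom 3 2 :=
  SimplexCategory.Hom.ext_one_left _ _ (by decide) (by decide)
lemma F9 : (δ 1 ≫ δ 1 : mk 1 ⟶ mk 3) = δ 1 ≫ δ 2 :=
  SimplexCategory.Hom.ext_one_left _ _ (by decide) (by decide)

/-- A vertical 1-simplex in the Segal target for k = 2, from two composable squares. -/
def pairEdge (A B : W.obj (op (mk 1), op (mk 1)))
    (hAB : W.hmap (δ 0) _ A = W.hmap (δ 1) _ B) :
    (W.segalTarget 2).obj (op (mk 1)) :=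
  ⟨![A, B], by
    intro i hi
    fin_cases i
    · show (W.rowMap (δ 0)).app _ A = (W.rowMap (δ 1)).app _ B
      erw [W.rowMap_app_eq_hmap, W.rowMap_app_eq_hmap]
      exact hAB
    · simp at hi⟩

lemma segalMap_app_comp (k : ℕ) (n : SimplexCategoryᵒᵖ) (x : (W.row (mk k)).obj n)
    (i : Fin k) :
    ((W.segalMap k).app n x).1 i = W.hmap (arrowHom k i) n x :=
  W.rowMap_app_eq_hmap _ _ _

/-- The common core of the one-step lemmas. -/
lemma stepCore (hW : W.IsSegal) {u' v' : W.Pt 0}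
    {c c' : W.Pt 1} (k k' : W.Pt 2)
    (Yedge : (W.segalTarget 2).obj (op (mk 1)))
    (hY1 : (W.segalTarget 2).map (δ 1).op Yedge = (W.segalMap 2).app _ k)
    (hY0 : (W.segalTarget 2).map (δ 0).op Yedge = (W.segalMap 2).app _ k')
    (hk1 : W.hmap (δ 1) _ k = c) (hk1' : W.hmap (δ 1) _ k' = c')
    (hsrc : W.hmap (δ 1) _ (Yedge.1 0) = W.vmap (σ 0) _ u')
    (htgt : W.hmap (δ 0) _ (Yedge.1 1) = W.vmap (σ 0) _ v') :
    W.HtpyStep u' v' c c' := by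
  obtain ⟨E, hE1, hE0, hEp⟩ := tf_lift1 (W.segalMap 2) (hW 2 (by norm_num) 1) k k'
    Yedge hY1 hY0
  have hE1' : W.vmap (δ 1) _ E = k := by rw [← W.row_map_eq_vmap]; exact hE1
  have hE0' : W.vmap (δ 0) _ E = k' := by rw [← W.row_map_eq_vmap]; exact hE0
  have hcomp0 : W.hmap (arrowHom 2 0) _ E = Yedge.1 0 := by
    rw [← W.segalMap_app_comp, hEp]
  have hcomp1 : W.hmap (arrowHom 2 1) _ E = Yedge.1 1 := by
    rw [← W.segalMap_app_comp, hEp]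
  change W.obj (op (mk 2), op (mk 1)) at E
  refine ⟨W.hmap (δ 1) _ E, ?_, ?_, ?_, ?_⟩
  · rw [← W.hv_comm, hE1', hk1]
  · rw [← W.hv_comm, hE0', hk1']
  · rw [W.hmap_hmap, vertex0_two, ← W.hmap_hmap, hcomp0, hsrc]
  · rw [W.hmap_hmap, vertex2_two, ← W.hmap_hmap, hcomp1, htgt]

/-- Step in the second argument of a composition. -/
lemma stepSecond (hW : W.IsSegal) {u v : W.Pt 0} {a b b' c c' : W.Pt 1}
    (hu : W.tgt a = u) (hstep : W.HtpyStep u v b b')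
    (hc : W.IsComposite a b c) (hc' : W.IsComposite a b' c') :
    W.HtpyStep (W.src a) v c c' := by
  obtain ⟨k, hk2, hk0, hk1⟩ := hc
  obtain ⟨k', hk2', hk0', hk1'⟩ := hc'
  obtain ⟨eb, heb1, heb0, hebs, hebt⟩ := hstep
  have hu' : W.hmap (δ 0) (op (mk 0)) a = u := hu
  have hAB : W.hmap (δ 0) _ (W.vmap (σ 0) (op (mk 1)) a) = W.hmap (δ 1) _ eb := by
    rw [W.hv_comm, hebs, hu']
  refine W.stepCore hW k k' (W.pairEdge _ _ hAB) ?_ ?_ hk1 hk1' ?_ ?_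
  · apply Subtype.ext
    funext j
    erw [W.segalMap_app_comp]
    fin_cases j
    · show (W.row (mk 1)).map (δ 1).op (W.vmap (σ 0) (op (mk 1)) a)
        = W.hmap (arrowHom 2 0) _ k
      erw [W.row_map_eq_vmap, W.vmap_d_s, arrowHom20, hk2]
    · show (W.row (mk 1)).map (δ 1).op eb = W.hmap (arrowHom 2 1) _ k
      erw [W.row_map_eq_vmap, heb1, arrowHom21, hk0]
  · apply Subtype.ext
    funext j
    erw [W.segalMap_app_comp]
    fin_cases j
    · show (W.row (mk 1)).map (δ 0).op (W.vmap (σ 0) (op (mk 1)) a)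
        = W.hmap (arrowHom 2 0) _ k'
      erw [W.row_map_eq_vmap, W.vmap_d_s, arrowHom20, hk2']
    · show (W.row (mk 1)).map (δ 0).op eb = W.hmap (arrowHom 2 1) _ k'
      erw [W.row_map_eq_vmap, heb0, arrowHom21, hk0']
  · show W.hmap (δ 1) _ (W.vmap (σ 0) (op (mk 1)) a) = W.vmap (σ 0) _ (W.src a)
    rw [W.hv_comm]
    rfl
  · show W.hmap (δ 0) _ eb = W.vmap (σ 0) _ v
    exact hebt

/-- Step in the first argument of a composition. -/
lemma stepFirst (hW : W.IsSegal) {u v : W.Pt 0} {a a' b c c' : W.Pt 1}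
    (hv : W.src b = v) (hstep : W.HtpyStep u v a a')
    (hc : W.IsComposite a b c) (hc' : W.IsComposite a' b c') :
    W.HtpyStep u (W.tgt b) c c' := by
  obtain ⟨k, hk2, hk0, hk1⟩ := hc
  obtain ⟨k', hk2', hk0', hk1'⟩ := hc'
  obtain ⟨ea, hea1, hea0, heas, heat⟩ := hstep
  have hv' : W.hmap (δ 1) (op (mk 0)) b = v := hv
  have hAB : W.hmap (δ 0) _ ea = W.hmap (δ 1) _ (W.vmap (σ 0) (op (mk 1)) b) := by
    rw [W.hv_comm, heat, hv']
  refine W.stepCore hW k k' (W.pairEdge _ _ hAB) ?_ ?_ hk1 hk1' ?_ ?_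
  · apply Subtype.ext
    funext j
    erw [W.segalMap_app_comp]
    fin_cases j
    · show (W.row (mk 1)).map (δ 1).op ea = W.hmap (arrowHom 2 0) _ k
      erw [W.row_map_eq_vmap, hea1, arrowHom20, hk2]
    · show (W.row (mk 1)).map (δ 1).op (W.vmap (σ 0) (op (mk 1)) b)
        = W.hmap (arrowHom 2 1) _ k
      erw [W.row_map_eq_vmap, W.vmap_d_s, arrowHom21, hk0]
  · apply Subtype.ext
    funext j
    erw [W.segalMap_app_comp]
    fin_cases j
    · show (W.row (mk 1)).map (δ 0).op ea = W.hmap (arrowHom 2 0) _ k'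
      erw [W.row_map_eq_vmap, hea0, arrowHom20, hk2']
    · show (W.row (mk 1)).map (δ 0).op (W.vmap (σ 0) (op (mk 1)) b)
        = W.hmap (arrowHom 2 1) _ k'
      erw [W.row_map_eq_vmap, W.vmap_d_s, arrowHom21, hk0']
  · show W.hmap (δ 1) _ ea = W.vmap (σ 0) _ u
    exact heas
  · show W.hmap (δ 0) _ (W.vmap (σ 0) (op (mk 1)) b) = W.vmap (σ 0) _ (W.tgt b)
    rw [W.hv_comm]
    rfl

/-- Existence of a 3-simplex with a given spine. -/
lemma spine3 (hW : W.IsSegal) (f g h : W.Pt 1)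
    (h1 : W.tgt f = W.src g) (h2 : W.tgt g = W.src h) :
    ∃ σ3 : W.Pt 3, W.hmap (arrowHom 3 0) _ σ3 = f ∧ W.hmap (arrowHom 3 1) _ σ3 = g ∧
      W.hmap (arrowHom 3 2) _ σ3 = h := by
  have h1' : W.hmap (δ 0) (op (mk 0)) f = W.hmap (δ 1) (op (mk 0)) g := h1
  have h2' : W.hmap (δ 0) (op (mk 0)) g = W.hmap (δ 1) (op (mk 0)) h := h2
  let y : (W.segalTarget 3).obj (op (mk 0)) := ⟨![f, g, h], by
    intro i hi
    fin_cases i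
    · show (W.rowMap (δ 0)).app _ f = (W.rowMap (δ 1)).app _ g
      erw [W.rowMap_app_eq_hmap, W.rowMap_app_eq_hmap]
      exact h1'
    · show (W.rowMap (δ 0)).app _ g = (W.rowMap (δ 1)).app _ h
      erw [W.rowMap_app_eq_hmap, W.rowMap_app_eq_hmap]
      exact h2'
    · simp at hi⟩
  obtain ⟨σ3, hσ⟩ := tf_surj0 (W.segalMap 3) (hW 3 (by norm_num) 0) y
  refine ⟨σ3, ?_, ?_, ?_⟩
  · have := congrFun (congrArg Subtype.val hσ) 0
    rw [W.segalMap_app_comp] at this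
    exact this
  · have := congrFun (congrArg Subtype.val hσ) 1
    rw [W.segalMap_app_comp] at this
    exact this
  · have := congrFun (congrArg Subtype.val hσ) 2
    rw [W.segalMap_app_comp] at this
    exact this

end BiSSet

open BiSSet in
/-- In a Segal space, composition is associative up to homotopy: any result of
`(h∘g)∘f` and any result of `h∘(g∘f)` lie in the same path component of `map(w,z)`. -/
theorem segalSpace_comp_assoc (W : BiSSet) (hW : W.IsSegal)
    (w x y z : W.Pt 0) (f g h : W.Pt 1)
    (hf : W.src f = w ∧ W.tgt f = x)
    (hg : W.src g = x ∧ W.tgt g = y)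
    (hh : W.src h = y ∧ W.tgt h = z)
    (gf hg' p q : W.Pt 1)
    (hgf : W.IsComposite f g gf)       -- g∘f
    (hhg : W.IsComposite g h hg')      -- h∘g
    (hp : W.IsComposite f hg' p)       -- (h∘g)∘f
    (hq : W.IsComposite gf h q)        -- h∘(g∘f)
    : W.Homotopic w z p q := by
  obtain ⟨hfs, hft⟩ := hf
  obtain ⟨hgs, hgt⟩ := hg
  obtain ⟨hhs, hht⟩ := hh
  have hfg : W.tgt f = W.src g := by rw [hft, hgs]
  have hgh : W.tgt g = W.src h := by rw [hgt, hhs]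
  obtain ⟨σ3, s0, s1, s2⟩ := W.spine3 hW f g h hfg hgh
  have cA : W.IsComposite f g (W.hmap (SimplexCategory.δ 1) _ (W.hmap (SimplexCategory.δ 3) _ σ3)) :=
    ⟨W.hmap (SimplexCategory.δ 3) _ σ3,
      by rw [W.hmap_hmap, F1]; exact s0,
      by rw [W.hmap_hmap, F2]; exact s1, rfl⟩
  have cB : W.IsComposite g h (W.hmap (SimplexCategory.δ 1) _ (W.hmap (SimplexCategory.δ 0) _ σ3)) :=
    ⟨W.hmap (SimplexCategory.δ 0) _ σ3,
      by rw [W.hmap_hmap, F3]; exact s1,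
      by rw [W.hmap_hmap, F4]; exact s2, rfl⟩
  have cC : W.IsComposite f (W.hmap (SimplexCategory.δ 1) _ (W.hmap (SimplexCategory.δ 0) _ σ3))
      (W.hmap (SimplexCategory.δ 1) _ (W.hmap (SimplexCategory.δ 2) _ σ3)) :=
    ⟨W.hmap (SimplexCategory.δ 2) _ σ3,
      by rw [W.hmap_hmap, F5]; exact s0,
      by rw [W.hmap_hmap, F6, ← W.hmap_hmap], rfl⟩
  have cD : W.IsComposite (W.hmap (SimplexCategory.δ 1) _ (W.hmap (SimplexCategory.δ 3) _ σ3)) h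
      (W.hmap (SimplexCategory.δ 1) _ (W.hmap (SimplexCategory.δ 2) _ σ3)) :=
    ⟨W.hmap (SimplexCategory.δ 1) _ σ3,
      by rw [W.hmap_hmap, F7, ← W.hmap_hmap],
      by rw [W.hmap_hmap, F8]; exact s2,
      by rw [W.hmap_hmap, F9, ← W.hmap_hmap]⟩
  have s1' := W.stepSecond hW hgh (W.reflStep h) hhg cB
  have s2' := W.stepSecond hW hfg s1' hp cC
  have s3' := W.stepSecond hW hfg (W.reflStep g) hgf cA
  have s4' := W.stepFirst hW (by rw [hhs, ← hgt]) s3' hq cD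
  rw [← hfs, ← hht]
  exact Relation.EqvGen.trans _ _ _ (Relation.EqvGen.rel _ _ s2')
    (Relation.EqvGen.symm _ _ (Relation.EqvGen.rel _ _ s4'))
end

section
/- For a small category C, the maximal subgroupoid of the functor category C^{I[n]} is equivalent to (iso C)^{[n]}: there is an isomorphism of categories iso(C^{I[n]}) ≅ (iso C)^{I[n]} and an equivalence (iso C)^{I[n]} ≃ (iso C)^{[n]}. -/
open CategoryTheory

/-- `Chaotic α` is the groupoid with objects `α` and a unique morphism (necessarily an
isomorphism) between any two objects; `Chaotic (Fin (n+1))` is the groupoid `I[n]`. -/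
def Chaotic (α : Type) : Type := α

instance (α : Type) : Groupoid (Chaotic α) where
  Hom _ _ := PUnit
  id _ := ⟨⟩
  comp _ _ := ⟨⟩
  inv _ := ⟨⟩

section Aux

variable {C : Type} [SmallCategory C] {n : ℕ}

def Phi : Core (Chaotic (Fin (n+1)) ⥤ C) ⥤ (Chaotic (Fin (n+1)) ⥤ Core C) where
  obj F := Core.functorToCore F.of
  map {F G} η :=
    { app := fun i => ⟨⟨η.iso.hom.app i, η.iso.inv.app i,
        NatTrans.congr_app η.iso.hom_inv_id i, NatTrans.congr_app η.iso.inv_hom_id i⟩⟩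
      naturality := fun i j f => Core.hom_ext (η.iso.hom.naturality f) }

def Psi : (Chaotic (Fin (n+1)) ⥤ Core C) ⥤ Core (Chaotic (Fin (n+1)) ⥤ C) where
  obj F := ⟨F ⋙ Core.inclusion C⟩
  map {F G} η := ⟨
    { hom := { app := fun i => (η.app i).iso.hom
               naturality := fun i j f => congrArg (fun x => x.iso.hom) (η.naturality f) }
      inv := { app := fun i => (η.app i).iso.inv
               naturality := fun i j f => by
                  have h := congrArg (fun x => x.iso.hom) (η.naturality f)
                  simp only [coreCategory_comp_iso, Iso.trans_hom] at h
                  simp only [Functor.comp_map, Core.inclusion]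
                  rw [Iso.comp_inv_eq, Category.assoc, Iso.eq_inv_comp]
                  exact h.symm }
      hom_inv_id := by ext i; exact (η.app i).iso.hom_inv_id
      inv_hom_id := by ext i; exact (η.app i).iso.inv_hom_id }⟩

theorem PsiPhi : (Psi (C := C) (n := n)) ⋙ Phi = 𝟭 _ := by
  have hobj : ∀ G : Chaotic (Fin (n+1)) ⥤ Core C, Phi.obj (Psi.obj G) = G := by
    intro G
    refine CategoryTheory.Functor.ext (fun i => rfl) (fun i j f => ?_)
    apply Core.hom_ext
    simp [Phi, Psi, Core.functorToCore, Core.inclusion]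
    exact (Category.id_comp _).symm
  refine CategoryTheory.Functor.ext hobj (fun F G η => ?_)
  ext i
  have e : ∀ {X Y : Core C} (h : X = Y), (eqToHom h).iso.hom = eqToHom (congrArg Core.of h) := by
    intro X Y h; subst h; rfl
  simp [Phi, Psi, Core.inclusion, eqToHom_app, e]
  erw [eqToHom_app, eqToHom_app, e, e]
  exact (by simp : (η.app i).iso.hom = 𝟙 _ ≫ (η.app i).iso.hom ≫ 𝟙 _)

theorem PhiPsi : (Phi (C := C) (n := n)) ⋙ Psi = 𝟭 _ := rfl

/-- inclusion [n] → I[n] -/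
def incl : Fin (n+1) ⥤ Chaotic (Fin (n+1)) where
  obj i := i
  map _ := ⟨⟩

def restr : (Chaotic (Fin (n+1)) ⥤ Core C) ⥤ (Fin (n+1) ⥤ Core C) :=
  (Functor.whiskeringLeft _ _ _).obj incl

def ChExt : (Fin (n+1) ⥤ Core C) ⥤ (Chaotic (Fin (n+1)) ⥤ Core C) where
  obj F :=
    { obj := F.obj
      map := fun {i j} _ =>
        Groupoid.inv (F.map (homOfLE (Fin.zero_le i))) ≫ F.map (homOfLE (Fin.zero_le j))
      map_id := fun i => Groupoid.inv_comp _
      map_comp := fun {i j k} f g => by simp }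
  map {F G} η :=
    { app := fun i => η.app i
      naturality := fun i j f => by
        have h : ∀ i : Fin (n+1), η.app i =
            Groupoid.inv (F.map (homOfLE (Fin.zero_le i))) ≫ η.app 0 ≫
              G.map (homOfLE (Fin.zero_le i)) := by
          intro i
          rw [Groupoid.inv_eq_inv, IsIso.eq_inv_comp]
          exact η.naturality _
        dsimp only
        rw [h i, h j]
        simp [Groupoid.inv_eq_inv] }

def chaoticEquiv : (Chaotic (Fin (n+1)) ⥤ Core C) ≌ (Fin (n+1) ⥤ Core C) :=
  CategoryTheory.Equivalence.mk restr ChExt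
    (NatIso.ofComponents (fun G => NatIso.ofComponents (fun i => Iso.refl _)
      (by
        intro i j f
        simp only [Iso.refl_hom, Category.comp_id, Category.id_comp]
        erw [Category.comp_id, Category.id_comp]
        show G.map f = Groupoid.inv (G.map (incl.map (homOfLE (Fin.zero_le i)))) ≫
            G.map (incl.map (homOfLE (Fin.zero_le j)))
        have key := G.map_comp (Y := i) (incl.map (homOfLE (Fin.zero_le i))) f
        exact ((congrArg (· ≫ G.map f) (Groupoid.inv_comp _)).trans (Category.id_comp _)).symm.trans ((Category.assoc _ _ _).trans (congrArg (Groupoid.inv _ ≫ ·) key.symm))))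
      (by intro F G η; ext i; simp [restr, ChExt, incl]; rfl))
    (NatIso.ofComponents (fun F => NatIso.ofComponents (fun i => Iso.refl _)
      (by
        intro i j f
        simp only [Iso.refl_hom, Category.comp_id, Category.id_comp]
        erw [Category.comp_id, Category.id_comp]
        show Groupoid.inv (F.map (homOfLE (Fin.zero_le i))) ≫ _ = F.map f
        rw [Groupoid.inv_eq_inv]
        refine (IsIso.inv_comp_eq _).mpr ?_
        exact (congrArg F.map (Subsingleton.elim _ _)).trans (F.map_comp _ _)))
      (by intro F G η; ext i; simp [restr, ChExt, incl]))

end Aux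

/-- The maximal subgroupoid (core) of `C^{I[n]}` is isomorphic, as a category, to
`(iso C)^{I[n]}`, and the latter is equivalent to `(iso C)^{[n]}` (restriction along
the inclusion `[n] → I[n]`), where `iso C` is the core of `C`, `I[n]` is the chaotic
groupoid on `n+1` objects, and `[n]` is the linear order `0 → ⋯ → n`. -/
theorem core_functor_category_chaotic (n : ℕ) (C : Type) [SmallCategory C] :
    Nonempty ((Cat.of (CategoryTheory.Core (Chaotic (Fin (n + 1)) ⥤ C)) : Cat) ≅
        Cat.of (Chaotic (Fin (n + 1)) ⥤ CategoryTheory.Core C)) ∧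
    Nonempty ((Chaotic (Fin (n + 1)) ⥤ CategoryTheory.Core C) ≌
        (Fin (n + 1) ⥤ CategoryTheory.Core C)) := by
  exact ⟨⟨⟨Phi.toCatHom, Psi.toCatHom, congrArg Functor.toCatHom PhiPsi,
    congrArg Functor.toCatHom PsiPhi⟩⟩, ⟨chaoticEquiv⟩⟩
end
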